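/- Let Φ : ℝ^d → ℝ and Ψ : ℝ^s → ℝ be even functions that are conditionally negative definite of order 1. Let x_1,…,x_n ∈ ℝ^d be pairwise distinct, y_1,…,y_n ∈ ℝ^s be pairwise distinct, and define A, B ∈ ℝ^{n×n} by A_{ij} = Φ(x_i − x_j) and B_{ij} = Ψ(y_i − y_j). Then for every nonzero matrix V ∈ ℝ^{n×n} with V𝟙 = 0 and Vᵀ𝟙 = 0 one has tr(B Vᵀ A V) > 0; that is, the Hessian −(B⊗A) of the energy E₂(X) = −tr(B Xᵀ A X) is negative definite on lin(DS). -/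

import Mathlib

/-!
Evenness of `Φ` makes `A` symmetric, so `C = -(Vᵀ A V)` is positive semidefinite: its quadratic
form is `η ↦ -(Vη)ᵀ A (Vη)`, and `Vη ⊥ 𝟙` because `Vᵀ𝟙 = 0`. Strictness of `A` on `𝟙^⊥` and
`V ≠ 0` give `C ≠ 0`, and `V𝟙 = 0` gives `C𝟙 = 0`. Factoring `C = Rᵀ R`, the rows `r_k` of `R`
lie in `𝟙^⊥`, not all zero, so `tr (B Vᵀ A V) = -tr (B C) = -∑ₖ r_k B r_kᵀ > 0`.
-/

open Matrix

/-- A function `Φ : ℝ^d → ℝ` is conditionally negative definite of order 1 if for every finite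
collection of pairwise distinct points `x_1, …, x_n` and every nonzero vector `η` with
`∑ i, η i = 0`, one has `∑ i j, η i * η j * Φ (x i - x j) < 0`. -/
def CondNegDefOrder1 {d : ℕ} (Φ : (Fin d → ℝ) → ℝ) : Prop :=
  ∀ (n : ℕ) (x : Fin n → (Fin d → ℝ)), Function.Injective x →
    ∀ η : Fin n → ℝ, η ≠ 0 → (∑ i, η i) = 0 →
      ∑ i, ∑ j, η i * η j * Φ (x i - x j) < 0

namespace Matrix

variable {ι : Type*} [Fintype ι]

def IsCondNegDef (A : Matrix ι ι ℝ) : Prop :=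
  ∀ η : ι → ℝ, η ≠ 0 → ∑ i, η i = 0 → η ⬝ᵥ (A *ᵥ η) < 0

theorem IsCondNegDef.dotProduct_mulVec_nonpos {A : Matrix ι ι ℝ} (hA : A.IsCondNegDef)
    {η : ι → ℝ} (hη : ∑ i, η i = 0) : η ⬝ᵥ (A *ᵥ η) ≤ 0 := by
  rcases eq_or_ne η 0 with rfl | hη0
  · simp
  · exact (hA η hη0 hη).le

theorem sum_mulVec_eq_zero {V : Matrix ι ι ℝ} (hV : Vᵀ *ᵥ 1 = 0) (η : ι → ℝ) :
    ∑ i, (V *ᵥ η) i = 0 := by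
  rw [← one_dotProduct, dotProduct_mulVec, ← mulVec_transpose, hV, zero_dotProduct]

theorem dotProduct_transpose_mul_mul_mulVec (A V : Matrix ι ι ℝ) (η : ι → ℝ) :
    η ⬝ᵥ ((Vᵀ * A * V) *ᵥ η) = (V *ᵥ η) ⬝ᵥ (A *ᵥ (V *ᵥ η)) := by
  rw [← mulVec_mulVec, ← mulVec_mulVec, dotProduct_mulVec, vecMul_transpose]

theorem IsCondNegDef.posSemidef_neg_transpose_mul_mul {A V : Matrix ι ι ℝ}
    (hA : A.IsCondNegDef) (hA_symm : A.IsSymm) (hV : Vᵀ *ᵥ 1 = 0) :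
    (-(Vᵀ * A * V)).PosSemidef := by
  have hherm : (Vᵀ * A * V).IsHermitian := by
    simpa [conjTranspose_eq_transpose_of_trivial] using
      isHermitian_conjTranspose_mul_mul V (isHermitian_iff_isSymm.mpr hA_symm)
  refine .of_dotProduct_mulVec_nonneg hherm.neg fun η => ?_
  rw [star_trivial, neg_mulVec, dotProduct_neg, dotProduct_transpose_mul_mul_mulVec]
  exact neg_nonneg.mpr (hA.dotProduct_mulVec_nonpos (sum_mulVec_eq_zero hV η))

theorem IsCondNegDef.transpose_mul_mul_ne_zero {A V : Matrix ι ι ℝ}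
    (hA : A.IsCondNegDef) (hV : Vᵀ *ᵥ 1 = 0) (hV0 : V ≠ 0) : Vᵀ * A * V ≠ 0 := by
  obtain ⟨η, hη⟩ : ∃ η, V *ᵥ η ≠ 0 := by
    by_contra! h
    exact hV0 (ext_iff_mulVec.mpr fun v => by simp [h])
  intro h0
  have := hA _ hη (sum_mulVec_eq_zero hV η)
  rw [← dotProduct_transpose_mul_mul_mulVec, h0, zero_mulVec, dotProduct_zero] at this
  exact this.false

theorem trace_mul_mul_transpose {κ : Type*} [Fintype κ] (R : Matrix κ ι ℝ) (B : Matrix ι ι ℝ) :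
    (R * B * Rᵀ).trace = ∑ k, R k ⬝ᵥ (B *ᵥ R k) := by
  refine Finset.sum_congr rfl fun k _ => ?_
  rw [diag_apply, mul_apply, dotProduct_mulVec, dotProduct]
  rfl

open scoped MatrixOrder in
theorem IsCondNegDef.trace_mul_neg_of_posSemidef {B C : Matrix ι ι ℝ} (hB : B.IsCondNegDef)
    (hC : C.PosSemidef) (hC1 : C *ᵥ 1 = 0) (hC0 : C ≠ 0) : (B * C).trace < 0 := by
  classical
  obtain ⟨R, rfl⟩ := CStarAlgebra.nonneg_iff_eq_star_mul_self.mp hC.nonneg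
  rw [star_eq_conjTranspose, conjTranspose_eq_transpose_of_trivial] at hC1 hC0 ⊢
  have hR1 : R *ᵥ 1 = 0 := by
    rwa [← conjTranspose_eq_transpose_of_trivial, conjTranspose_mul_self_mulVec_eq_zero] at hC1
  have hrow : ∀ k, ∑ i, R k i = 0 := fun k => by
    rw [← dotProduct_one]; exact congrFun hR1 k
  obtain ⟨k, hk⟩ : ∃ k, R k ≠ 0 := by
    by_contra! h
    exact hC0 (by rw [show R = 0 from funext h, Matrix.mul_zero])
  rw [← Matrix.mul_assoc, trace_mul_cycle, trace_mul_mul_transpose]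
  exact Finset.sum_neg' (fun k _ => hB.dotProduct_mulVec_nonpos (hrow k))
    ⟨k, Finset.mem_univ k, hB _ hk (hrow k)⟩

theorem isSymm_of_even {E ι : Type*} [AddGroup E] {Φ : E → ℝ} (hΦ : ∀ v, Φ (-v) = Φ v)
    {x : ι → E} {A : Matrix ι ι ℝ} (hA : ∀ i j, A i j = Φ (x i - x j)) : A.IsSymm :=
  IsSymm.ext fun i j => by rw [hA, hA, ← neg_sub, hΦ]

end Matrix

theorem CondNegDefOrder1.isCondNegDef {d n : ℕ} {Φ : (Fin d → ℝ) → ℝ} (hΦ : CondNegDefOrder1 Φ)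
    {x : Fin n → Fin d → ℝ} (hx : Function.Injective x) {A : Matrix (Fin n) (Fin n) ℝ}
    (hA : ∀ i j, A i j = Φ (x i - x j)) : A.IsCondNegDef := by
  intro η hη hsum
  convert hΦ n x hx η hη hsum using 1
  simp only [dotProduct, mulVec, Finset.mul_sum, hA]
  exact Finset.sum_congr rfl fun i _ => Finset.sum_congr rfl fun j _ => by ring

theorem conditionally_concave_of_condNegDef_general
    {d s n : ℕ} (Φ : (Fin d → ℝ) → ℝ) (Ψ : (Fin s → ℝ) → ℝ)
    (hΦeven : ∀ v, Φ (-v) = Φ v)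
    (hΦ : CondNegDefOrder1 Φ) (hΨ : CondNegDefOrder1 Ψ)
    (x : Fin n → (Fin d → ℝ)) (hx : Function.Injective x)
    (y : Fin n → (Fin s → ℝ)) (hy : Function.Injective y)
    (A B : Matrix (Fin n) (Fin n) ℝ)
    (hA : ∀ i j, A i j = Φ (x i - x j)) (hB : ∀ i j, B i j = Ψ (y i - y j))
    (V : Matrix (Fin n) (Fin n) ℝ) (hV : V ≠ 0)
    (hV1 : V *ᵥ (fun _ => 1) = 0) (hV2 : Vᵀ *ᵥ (fun _ => 1) = 0) :
    0 < (B * Vᵀ * A * V).trace := by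
  have hA_cnd := hΦ.isCondNegDef hx hA
  have hC := hA_cnd.posSemidef_neg_transpose_mul_mul (isSymm_of_even hΦeven hA) hV2
  have hC1 : -(Vᵀ * A * V) *ᵥ 1 = 0 := by
    rw [neg_mulVec, ← mulVec_mulVec, Pi.one_def, hV1, mulVec_zero, neg_zero]
  have hC0 := neg_ne_zero.mpr (hA_cnd.transpose_mul_mul_ne_zero hV2 hV)
  have := (hΨ.isCondNegDef hy hB).trace_mul_neg_of_posSemidef hC hC1 hC0
  rwa [Matrix.mul_neg, trace_neg, neg_lt_zero, ← Matrix.mul_assoc, ← Matrix.mul_assoc] at this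

/-- If `Φ, Ψ` are even, conditionally negative definite functions of order 1, and
`A i j = Φ (x i - x j)`, `B i j = Ψ (y i - y j)` for pairwise distinct points `x i` and
pairwise distinct points `y i`, then for every nonzero `V` with `V𝟙 = 0` and `Vᵀ𝟙 = 0` one has
`tr (B Vᵀ A V) > 0`; i.e. the Hessian `-(B ⊗ A)` of `E₂(X) = -tr (B Xᵀ A X)` is negative
definite on `lin(DS)`. -/
theorem conditionally_concave_of_condNegDef
    {d s n : ℕ} (Φ : (Fin d → ℝ) → ℝ) (Ψ : (Fin s → ℝ) → ℝ)
    (hΦeven : ∀ v, Φ (-v) = Φ v) (hΨeven : ∀ v, Ψ (-v) = Ψ v)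
    (hΦ : CondNegDefOrder1 Φ) (hΨ : CondNegDefOrder1 Ψ)
    (x : Fin n → (Fin d → ℝ)) (hx : Function.Injective x)
    (y : Fin n → (Fin s → ℝ)) (hy : Function.Injective y)
    (A B : Matrix (Fin n) (Fin n) ℝ)
    (hA : ∀ i j, A i j = Φ (x i - x j)) (hB : ∀ i j, B i j = Ψ (y i - y j))
    (V : Matrix (Fin n) (Fin n) ℝ) (hV : V ≠ 0)
    (hV1 : V *ᵥ (fun _ => 1) = 0) (hV2 : Vᵀ *ᵥ (fun _ => 1) = 0) :
    0 < (B * Vᵀ * A * V).trace :=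
  conditionally_concave_of_condNegDef_general Φ Ψ hΦeven hΦ hΨ x hx y hy A B hA hB V hV hV1 hV2
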